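/- Let U and V be 2×2 complex matrices with V unitary (Vᴴ V = 1) and V * V = U. In the 8×8 complex matrices (three qubits q₁, q₂, q₃ with q₁, q₂ controls and q₃ target), define: N₁ := I₂ ⊗ ctrl V (control q₂, target q₃); N₂ := CNOT ⊗ I₂ (control q₁, target q₂); N₃ := I₂ ⊗ ctrl Vᴴ; N₄ := CNOT ⊗ I₂; N₅ := |0⟩⟨0| ⊗ I₄ + |1⟩⟨1| ⊗ I₂ ⊗ V (controlled-V with control q₁ and target q₃, identity on q₂). Then C²U = N₅ * N₄ * N₃ * N₂ * N₁ (N₁ applied first). This is the standard decomposition of the doubly-controlled gate C²U into two CNOTs and three singly-controlled V^{±1} gates. -/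

import Mathlib

open Matrix

/-- `n`-qubit computational basis states, the index set of the `n`-fold Kronecker
product of 2×2 matrices in the standard ordering (`2^n` elements). -/
abbrev Qu (n : ℕ) := Fin n → Fin 2

/-- Kronecker product of an `a`-qubit matrix and a `b`-qubit matrix, under the standard
identification of the `(a+b)`-qubit basis with pairs of bases. -/
def qKron {a b : ℕ} (A : Matrix (Qu a) (Qu a) ℂ) (B : Matrix (Qu b) (Qu b) ℂ) :
    Matrix (Qu (a + b)) (Qu (a + b)) ℂ :=
  Matrix.of fun i j =>
    A (fun m => i (Fin.castAdd b m)) (fun m => j (Fin.castAdd b m)) *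
      B (fun m => i (Fin.natAdd a m)) (fun m => j (Fin.natAdd a m))

/-- A 2×2 matrix viewed as a 1-qubit matrix. -/
def lift1 (M : Matrix (Fin 2) (Fin 2) ℂ) : Matrix (Qu 1) (Qu 1) ℂ :=
  Matrix.of fun i j => M (i 0) (j 0)

/-- `E_k = |1…1⟩⟨1…1|` on `k` qubits: a single `1` in the entry indexed by the all-ones
bit string. -/
def allOnes (k : ℕ) : Matrix (Qu k) (Qu k) ℂ :=
  Matrix.single (fun _ => 1) (fun _ => 1) 1

/-- The `k`-controlled gate `C^k M = (1 − E_k) ⊗ 1₂ + E_k ⊗ M`. -/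
def cGate (k : ℕ) (M : Matrix (Fin 2) (Fin 2) ℂ) :
    Matrix (Qu (k + 1)) (Qu (k + 1)) ℂ :=
  qKron ((1 : Matrix (Qu k) (Qu k) ℂ) - allOnes k) (1 : Matrix (Qu 1) (Qu 1) ℂ) +
    qKron (allOnes k) (lift1 M)

/-! Every factor is block diagonal with respect to the first qubit, i.e. of the form
`qMux A B = |0⟩⟨0| ⊗ A + |1⟩⟨1| ⊗ B`, and such matrices multiply blockwise; so is
`C²U = qMux 1 (ctrl U)`. In the `|0⟩` block the product is `ctrl V† · ctrl V = 1`. In the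
`|1⟩` block, conjugation by `X ⊗ 1` swaps the two branches of `ctrl V† = qMux 1 V†`, so the
product is `qMux V V · qMux V† 1 · qMux 1 V = qMux (V V†) (V V) = ctrl U`. -/

open Kronecker

local notation "P₀" => (!![1, 0; 0, 0] : Matrix (Fin 2) (Fin 2) ℂ)
local notation "P₁" => (!![0, 0; 0, 1] : Matrix (Fin 2) (Fin 2) ℂ)
local notation "σX" => (!![0, 1; 1, 0] : Matrix (Fin 2) (Fin 2) ℂ)

lemma qKron_eq_reindexAlgEquiv {a b : ℕ} (A : Matrix (Qu a) (Qu a) ℂ)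
    (B : Matrix (Qu b) (Qu b) ℂ) :
    qKron A B = reindexAlgEquiv ℂ ℂ (Fin.appendEquiv a b) (A ⊗ₖ B) := rfl

lemma lift1_eq_reindexAlgEquiv (M : Matrix (Fin 2) (Fin 2) ℂ) :
    lift1 M = reindexAlgEquiv ℂ ℂ (Equiv.funUnique (Fin 1) (Fin 2)).symm M := rfl

lemma qKron_mul_qKron {a b : ℕ} (A C : Matrix (Qu a) (Qu a) ℂ)
    (B D : Matrix (Qu b) (Qu b) ℂ) :
    qKron A B * qKron C D = qKron (A * C) (B * D) := by
  simp only [qKron_eq_reindexAlgEquiv, ← map_mul, mul_kronecker_mul]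

lemma qKron_one_one {a b : ℕ} :
    qKron (1 : Matrix (Qu a) (Qu a) ℂ) (1 : Matrix (Qu b) (Qu b) ℂ) = 1 := by
  rw [qKron_eq_reindexAlgEquiv, one_kronecker_one, map_one]

lemma qKron_add_left {a b : ℕ} (A B : Matrix (Qu a) (Qu a) ℂ) (C : Matrix (Qu b) (Qu b) ℂ) :
    qKron (A + B) C = qKron A C + qKron B C := by
  simp only [qKron_eq_reindexAlgEquiv, add_kronecker, map_add]

lemma qKron_add_right {a b : ℕ} (A : Matrix (Qu a) (Qu a) ℂ) (B C : Matrix (Qu b) (Qu b) ℂ) :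
    qKron A (B + C) = qKron A B + qKron A C := by
  simp only [qKron_eq_reindexAlgEquiv, kronecker_add, map_add]

lemma qKron_sub_right {a b : ℕ} (A : Matrix (Qu a) (Qu a) ℂ) (B C : Matrix (Qu b) (Qu b) ℂ) :
    qKron A (B - C) = qKron A B - qKron A C := by
  rw [eq_sub_iff_add_eq, ← qKron_add_right, sub_add_cancel]

lemma qKron_zero_left {a b : ℕ} (B : Matrix (Qu b) (Qu b) ℂ) :
    qKron (0 : Matrix (Qu a) (Qu a) ℂ) B = 0 := by
  rw [qKron_eq_reindexAlgEquiv, zero_kronecker, map_zero]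

lemma qKron_assoc {a b : ℕ} (A : Matrix (Qu a) (Qu a) ℂ) (B : Matrix (Qu b) (Qu b) ℂ)
    (C : Matrix (Qu 1) (Qu 1) ℂ) : qKron (qKron A B) C = qKron A (qKron B C) := by
  ext i j
  simp only [qKron, of_apply, mul_assoc]
  congr 3 <;> funext m <;> congr 1 <;> ext <;> simp

lemma lift1_mul (A B : Matrix (Fin 2) (Fin 2) ℂ) : lift1 (A * B) = lift1 A * lift1 B := by
  simp only [lift1_eq_reindexAlgEquiv, map_mul]

lemma lift1_one : lift1 1 = 1 := by
  rw [lift1_eq_reindexAlgEquiv, map_one]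

lemma lift1_add (A B : Matrix (Fin 2) (Fin 2) ℂ) : lift1 (A + B) = lift1 A + lift1 B := by
  simp only [lift1_eq_reindexAlgEquiv, map_add]

lemma lift1_zero : lift1 0 = 0 := by
  rw [lift1_eq_reindexAlgEquiv, map_zero]

lemma allOnes_add (a b : ℕ) : allOnes (a + b) = qKron (allOnes a) (allOnes b) := by
  unfold allOnes
  rw [qKron_eq_reindexAlgEquiv, single_kronecker_single, coe_reindexAlgEquiv, reindex_apply,
    submatrix_single_equiv, Equiv.symm_symm, mul_one]
  congr <;> exact (Fin.appendEquiv a b).symm_apply_eq.mp rfl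

lemma allOnes_one : allOnes 1 = lift1 P₁ := by
  have : P₁ = single 1 1 1 := by ext i j; fin_cases i <;> fin_cases j <;> rfl
  rw [this, lift1_eq_reindexAlgEquiv, coe_reindexAlgEquiv, reindex_apply, submatrix_single_equiv]
  rfl

lemma lift1_P₀_add_lift1_P₁ : lift1 P₀ + lift1 P₁ = 1 := by
  rw [← lift1_add, ← lift1_one]
  congr 1
  ext i j; fin_cases i <;> fin_cases j <;> simp

def qMux {n : ℕ} (A B : Matrix (Qu n) (Qu n) ℂ) : Matrix (Qu (1 + n)) (Qu (1 + n)) ℂ :=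
  qKron (lift1 P₀) A + qKron (lift1 P₁) B

section qMux

variable {n : ℕ}

lemma qMux_mul_qMux (A B C D : Matrix (Qu n) (Qu n) ℂ) :
    qMux A B * qMux C D = qMux (A * C) (B * D) := by
  have h₀₀ : P₀ * P₀ = P₀ := by ext i j; fin_cases i <;> fin_cases j <;> simp
  have h₀₁ : P₀ * P₁ = 0 := by ext i j; fin_cases i <;> fin_cases j <;> simp
  have h₁₀ : P₁ * P₀ = 0 := by ext i j; fin_cases i <;> fin_cases j <;> simp
  have h₁₁ : P₁ * P₁ = P₁ := by ext i j; fin_cases i <;> fin_cases j <;> simp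
  simp only [qMux, add_mul, mul_add, qKron_mul_qKron, ← lift1_mul, h₀₀, h₀₁, h₁₀, h₁₁,
    lift1_zero, qKron_zero_left, add_zero, zero_add]

lemma qKron_one_left_eq_qMux (A : Matrix (Qu n) (Qu n) ℂ) :
    qKron (1 : Matrix (Qu 1) (Qu 1) ℂ) A = qMux A A := by
  rw [← lift1_P₀_add_lift1_P₁, qKron_add_left, qMux]

lemma qMux_one_one : qMux (1 : Matrix (Qu n) (Qu n) ℂ) 1 = 1 := by
  rw [← qKron_one_left_eq_qMux, qKron_one_one]

lemma qKron_qMux (A B : Matrix (Qu n) (Qu n) ℂ) (C : Matrix (Qu 1) (Qu 1) ℂ) :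
    qKron (qMux A B) C = qMux (qKron A C) (qKron B C) := by
  rw [qMux, qMux, qKron_add_left, qKron_assoc, qKron_assoc]

lemma pauliX_conj_qMux (A B : Matrix (Qu n) (Qu n) ℂ) :
    qKron (lift1 σX) 1 * qMux A B * qKron (lift1 σX) 1 = qMux B A := by
  have h₀ : σX * P₀ * σX = P₁ := by ext i j; fin_cases i <;> fin_cases j <;> simp
  have h₁ : σX * P₁ * σX = P₀ := by ext i j; fin_cases i <;> fin_cases j <;> simp
  simp only [qMux, add_mul, mul_add, qKron_mul_qKron, ← lift1_mul, h₀, h₁, one_mul, mul_one,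
    add_comm]

end qMux

lemma cGate_one_eq_qMux (M : Matrix (Fin 2) (Fin 2) ℂ) : cGate 1 M = qMux 1 (lift1 M) := by
  rw [cGate, allOnes_one, ← lift1_P₀_add_lift1_P₁, add_sub_cancel_right,
    lift1_P₀_add_lift1_P₁]
  rfl

lemma qKron_cGate_one_one (M : Matrix (Fin 2) (Fin 2) ℂ) :
    qKron (cGate 1 M) (1 : Matrix (Qu 1) (Qu 1) ℂ) =
      qMux 1 (qKron (lift1 M) (1 : Matrix (Qu 1) (Qu 1) ℂ)) := by
  rw [cGate_one_eq_qMux, qKron_qMux, qKron_one_one]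

lemma cGate_succ (k : ℕ) (M : Matrix (Fin 2) (Fin 2) ℂ) :
    cGate (1 + k) M = qMux 1 (cGate k M) := by
  have hE : (1 : Matrix (Qu (1 + k)) (Qu (1 + k)) ℂ) - allOnes (1 + k) =
      qMux 1 (1 - allOnes k) := by
    rw [allOnes_add, allOnes_one, ← qMux_one_one, qMux, qMux, qKron_sub_right]
    abel
  rw [cGate, cGate, hE, allOnes_add, allOnes_one, qKron_qMux, qKron_one_one, qMux, qMux,
    qKron_assoc, qKron_add_right]
  abel

/-- The standard decomposition of the doubly-controlled gate `C²U` (controls `q₁, q₂`,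
target `q₃`) into two CNOTs and three singly-controlled `V^{±1}` gates, where `V² = U`
and `V` is unitary: `C²U = N₅ N₄ N₃ N₂ N₁` with `N₁ = I₂ ⊗ ctrl V`,
`N₂ = N₄ = CNOT ⊗ I₂`, `N₃ = I₂ ⊗ ctrl V†`,
`N₅ = |0⟩⟨0| ⊗ I₄ + |1⟩⟨1| ⊗ I₂ ⊗ V`. -/
theorem c2U_decomposition
    (U V : Matrix (Fin 2) (Fin 2) ℂ) (hVunit : Vᴴ * V = 1) (hVV : V * V = U)
    (N₁ N₂ N₃ N₄ N₅ : Matrix (Qu 3) (Qu 3) ℂ)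
    (hN₁ : N₁ = qKron (1 : Matrix (Qu 1) (Qu 1) ℂ) (cGate 1 V))
    (hN₂ : N₂ = qKron (cGate 1 !![0, 1; 1, 0]) (1 : Matrix (Qu 1) (Qu 1) ℂ))
    (hN₃ : N₃ = qKron (1 : Matrix (Qu 1) (Qu 1) ℂ) (cGate 1 Vᴴ))
    (hN₄ : N₄ = qKron (cGate 1 !![0, 1; 1, 0]) (1 : Matrix (Qu 1) (Qu 1) ℂ))
    (hN₅ : N₅ = qKron (lift1 !![1, 0; 0, 0]) (1 : Matrix (Qu 2) (Qu 2) ℂ) +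
        qKron (lift1 !![0, 0; 0, 1]) (qKron (1 : Matrix (Qu 1) (Qu 1) ℂ) (lift1 V))) :
    cGate 2 U = N₅ * N₄ * N₃ * N₂ * N₁ := by
  have h₅ : N₅ = qMux 1 (qMux (lift1 V) (lift1 V)) := by
    rw [hN₅, qMux, qKron_one_left_eq_qMux]
  have block₀ : cGate 1 Vᴴ * cGate 1 V = 1 := by
    rw [cGate_one_eq_qMux, cGate_one_eq_qMux, qMux_mul_qMux, ← lift1_mul, hVunit, lift1_one,
      mul_one, qMux_one_one]
  have block₁ : qMux (lift1 V) (lift1 V) * qKron (lift1 σX) 1 * cGate 1 Vᴴ *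
      qKron (lift1 σX) 1 * cGate 1 V = cGate 1 U := calc
    _ = qMux (lift1 V) (lift1 V) *
        (qKron (lift1 σX) 1 * qMux 1 (lift1 Vᴴ) * qKron (lift1 σX) 1) * qMux 1 (lift1 V) := by
      simp only [cGate_one_eq_qMux, mul_assoc]
    _ = qMux (lift1 V) (lift1 V) * qMux (lift1 Vᴴ) 1 * qMux 1 (lift1 V) := by
      rw [pauliX_conj_qMux]
    _ = qMux (lift1 (V * Vᴴ)) (lift1 (V * V)) := by
      rw [qMux_mul_qMux, qMux_mul_qMux, mul_one, mul_one, lift1_mul, lift1_mul]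
    _ = cGate 1 U := by rw [mul_eq_one_comm.mp hVunit, hVV, lift1_one, cGate_one_eq_qMux]
  rw [h₅, hN₄, hN₃, hN₂, hN₁, qKron_cGate_one_one, qKron_one_left_eq_qMux,
    qKron_one_left_eq_qMux, qMux_mul_qMux, qMux_mul_qMux, qMux_mul_qMux, qMux_mul_qMux, mul_one,
    one_mul, one_mul, block₀, block₁]
  exact cGate_succ 1 U
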